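/- Let Ω and Ω* be bounded domains in ℂ. For any deformation h ∈ 𝔇(Ω, Ω*) and every w ∈ Ω*, the topological degree satisfies deg_Ω(h, w) = 1; in particular h(Ω) ⊇ Ω*. -/

import Mathlib

open MeasureTheory Metric Set Filter Topology
open scoped ENNReal NNReal

noncomputable section
open scoped Classical

/-- Squared Hilbert–Schmidt norm of the differential `Df(z)` of a planar mapping. -/
def hsNormSq (f : ℂ → ℂ) (z : ℂ) : ℝ :=
  ‖fderiv ℝ f z 1‖ ^ 2 + ‖fderiv ℝ f z Complex.I‖ ^ 2

/-- Dirichlet energy `E[f] = ∫_Ω |Df|²`. -/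
def dEnergy (Ω : Set ℂ) (f : ℂ → ℂ) : ℝ := ∫ z in Ω, hsNormSq f z

/-- Dirichlet energy, valued in `ℝ≥0∞`. -/
def dEnergyE (Ω : Set ℂ) (f : ℂ → ℂ) : ℝ≥0∞ := ∫⁻ z in Ω, ENNReal.ofReal (hsNormSq f z)

/-- Jacobian determinant `J_f(z)`. -/
def jacDet (f : ℂ → ℂ) (z : ℂ) : ℝ := LinearMap.det (fderiv ℝ f z).toLinearMap

/-- `g` is the weak (distributional) partial derivative of `f` on `Ω` in direction `v`:
integration by parts against smooth compactly supported test functions. -/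
def IsWeakDerivOn (Ω : Set ℂ) (f g : ℂ → ℂ) (v : ℂ) : Prop :=
  ∀ φ : ℂ → ℝ, ContDiff ℝ (⊤ : ℕ∞) φ → HasCompactSupport φ → tsupport φ ⊆ Ω →
    ∫ z in Ω, (fderiv ℝ φ z v) • f z = - ∫ z in Ω, (φ z) • g z

/-- Membership in the Sobolev class `W^{1,2}(Ω)`: `f` is a.e. differentiable, `f` and
`|Df|²` are integrable on `Ω`, and the pointwise differential is the distributional one. -/
def MemW12 (Ω : Set ℂ) (f : ℂ → ℂ) : Prop :=
  (∀ᵐ z ∂(volume.restrict Ω), DifferentiableAt ℝ f z) ∧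
  IntegrableOn f Ω volume ∧ IntegrableOn (hsNormSq f) Ω volume ∧
  ∀ v : ℂ, IsWeakDerivOn Ω f (fun z => fderiv ℝ f z v) v

/-- Membership in the Sobolev class `W^{1,1}(Ω)`. -/
def MemW11 (Ω : Set ℂ) (f : ℂ → ℂ) : Prop :=
  (∀ᵐ z ∂(volume.restrict Ω), DifferentiableAt ℝ f z) ∧
  IntegrableOn f Ω volume ∧ IntegrableOn (fun z => Real.sqrt (hsNormSq f z)) Ω volume ∧
  ∀ v : ℂ, IsWeakDerivOn Ω f (fun z => fderiv ℝ f z v) v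

/-- Local Sobolev class `W^{1,2}_loc(Ω)`. -/
def MemW12loc (Ω : Set ℂ) (f : ℂ → ℂ) : Prop :=
  ∀ z ∈ Ω, ∃ ε > 0, ball z ε ⊆ Ω ∧ MemW12 (ball z ε) f

/-- Local Sobolev class `W^{1,1}_loc(Ω)`. -/
def MemW11loc (Ω : Set ℂ) (f : ℂ → ℂ) : Prop :=
  ∀ z ∈ Ω, ∃ ε > 0, ball z ε ⊆ Ω ∧ MemW11 (ball z ε) f

/-- `w` is a regular value of `g` on `U`. -/
def IsRegularValueOn (g : ℂ → ℂ) (U : Set ℂ) (w : ℂ) : Prop :=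
  ∀ z ∈ U, g z = w → jacDet g z ≠ 0

/-- Signed count of preimages of `w` under `g` in `U`. -/
def signedCount (g : ℂ → ℂ) (U : Set ℂ) (w : ℂ) : ℤ :=
  ∑ᶠ z ∈ {z ∈ U | g z = w}, if 0 < jacDet g z then (1 : ℤ) else -1

/-- The topological (Brouwer) degree of `h` on the open set `U` at the point `w`
equals `d`, characterized through smooth approximation: `w` stays away from `h(∂U)`,
and every smooth map `g` uniformly close to `h` on `closure U` for which `w` is a
regular value has signed preimage count `d`. -/
def HasDegree (h : ℂ → ℂ) (U : Set ℂ) (w : ℂ) (d : ℤ) : Prop :=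
  0 < infDist w (h '' frontier U) ∧
  ∀ g : ℂ → ℂ, ContDiff ℝ (⊤ : ℕ∞) g →
    (∀ z ∈ closure U, dist (g z) (h z) < infDist w (h '' frontier U)) →
    IsRegularValueOn g U w → signedCount g U w = d

/-- `h` is a homeomorphism of `Ω` onto `Ω'` (for open planar sets, continuity of the
inverse is automatic by invariance of domain). -/
def IsHomeoOn (h : ℂ → ℂ) (Ω Ω' : Set ℂ) : Prop :=
  ContinuousOn h Ω ∧ InjOn h Ω ∧ h '' Ω = Ω'

/-- `h` is a sense-preserving homeomorphism of `Ω` onto `Ω'`: its local degree is `+1`. -/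
def IsSPHomeoOn (h : ℂ → ℂ) (Ω Ω' : Set ℂ) : Prop :=
  IsHomeoOn h Ω Ω' ∧
  ∀ U : Set ℂ, IsOpen U → IsCompact (closure U) → closure U ⊆ Ω →
    ∀ w ∈ h '' U, HasDegree h U w 1

/-- The boundary distance function `δ_h(z) = dist(h(z), ∂Ω')`, extended by `0` outside `Ω`. -/
def deltaFun (Ω Ω' : Set ℂ) (h : ℂ → ℂ) (z : ℂ) : ℝ :=
  if z ∈ Ω then infDist (h z) (frontier Ω') else 0

/-- `cδ`-uniform convergence: uniform convergence on compact subsets of `Ω` together with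
uniform convergence of the boundary distance functions on `closure Ω`. -/
def CDeltaULim (Ω Ω' : Set ℂ) (hj : ℕ → ℂ → ℂ) (h : ℂ → ℂ) : Prop :=
  (∀ K : Set ℂ, K ⊆ Ω → IsCompact K → TendstoUniformlyOn (fun j => hj j) h atTop K) ∧
  TendstoUniformlyOn (fun j => deltaFun Ω Ω' (hj j)) (deltaFun Ω Ω' h) atTop (closure Ω)

/-- A deformation `h : Ω → closure Ω'`: a `W^{1,2}` mapping with a.e. nonnegative Jacobian,
`∫_Ω J_h ≤ |Ω'|`, which is a `cδ`-uniform limit of sense-preserving homeomorphisms of `Ω`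
onto `Ω'`. -/
def IsDeformation (Ω Ω' : Set ℂ) (h : ℂ → ℂ) : Prop :=
  MemW12 Ω h ∧ MapsTo h Ω (closure Ω') ∧
  (∀ᵐ z ∂(volume.restrict Ω), 0 ≤ jacDet h z) ∧
  (∫ z in Ω, jacDet h z) ≤ (volume Ω').toReal ∧
  ∃ hj : ℕ → ℂ → ℂ, (∀ j, IsSPHomeoOn (hj j) Ω Ω') ∧ CDeltaULim Ω Ω' hj h

/-- The set `G = {z ∈ Ω : h(z) ∈ Ω'}`. -/
def goodSet (Ω Ω' : Set ℂ) (h : ℂ → ℂ) : Set ℂ := {z ∈ Ω | h z ∈ Ω'}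

/-- `E_H(Ω,Ω')`: infimum of the Dirichlet energy over sense-preserving
`W^{1,2}`-homeomorphisms of `Ω` onto `Ω'`. -/
def minEnergyH (Ω Ω' : Set ℂ) : ℝ :=
  sInf {e | ∃ h : ℂ → ℂ, IsSPHomeoOn h Ω Ω' ∧ MemW12 Ω h ∧ e = dEnergy Ω h}

/-- `E(Ω,Ω')`: infimum of the Dirichlet energy over deformations. -/
def minEnergyD (Ω Ω' : Set ℂ) : ℝ :=
  sInf {e | ∃ h : ℂ → ℂ, IsDeformation Ω Ω' h ∧ e = dEnergy Ω h}

/-- A bounded domain in the plane. -/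
def IsBoundedDomain (Ω : Set ℂ) : Prop :=
  IsOpen Ω ∧ IsConnected Ω ∧ Bornology.IsBounded Ω

/-- The family `C` consists precisely of the connected components of the complement of `Ω`:
they are closed, connected, pairwise disjoint and cover `ℂ ∖ Ω`.  (A domain is
`k`-connected when its complement has exactly `k` components.) -/
def ComplementComponents {k : ℕ} (Ω : Set ℂ) (C : Fin k → Set ℂ) : Prop :=
  (∀ i, IsClosed (C i)) ∧ (∀ i, IsConnected (C i)) ∧
  Pairwise (Function.onFun Disjoint C) ∧ (⋃ i, C i) = Ωᶜ

/-- A doubly connected set: the complement has exactly two connected components. -/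
def IsDoublyConnected (Ω : Set ℂ) : Prop :=
  ∃ A B : Set ℂ, IsClosed A ∧ IsClosed B ∧ IsConnected A ∧ IsConnected B ∧
    Disjoint A B ∧ A ∪ B = Ωᶜ

/-- The circular annulus `A(r,R) = {z : r < |z| < R}`. -/
def cAnnulus (r R : ℝ) : Set ℂ := {z : ℂ | r < ‖z‖ ∧ ‖z‖ < R}

/-- `U` is conformally equivalent to `V`. -/
def ConformallyEquiv (U V : Set ℂ) : Prop :=
  ∃ φ : ℂ → ℂ, DifferentiableOn ℂ φ U ∧ InjOn φ U ∧ φ '' U = V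

/-- `Ω` has conformal modulus `m`: `Ω` is conformally equivalent to a circular annulus
`A(r,R)` and `m = log (R/r)` (`m = ∞` in the degenerate case `r = 0`). -/
def HasConformalModulus (Ω : Set ℂ) (m : ℝ≥0∞) : Prop :=
  ∃ r R : ℝ, 0 ≤ r ∧ r < R ∧ ConformallyEquiv Ω (cAnnulus r R) ∧
    m = if r = 0 then ⊤ else ENNReal.ofReal (Real.log (R / r))

/-- `f` is a diffeomorphism of `Ω` onto `Ω'`. -/
def IsDiffeoOn (f : ℂ → ℂ) (Ω Ω' : Set ℂ) : Prop :=
  ContDiffOn ℝ 1 f Ω ∧ InjOn f Ω ∧ f '' Ω = Ω' ∧ ∀ z ∈ Ω, jacDet f z ≠ 0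

/-- A conformal automorphism of `Ω`. -/
def IsConformalAutomorphism (Ω : Set ℂ) (φ : ℂ → ℂ) : Prop :=
  DifferentiableOn ℂ φ Ω ∧ InjOn φ Ω ∧ φ '' Ω = Ω

/-- An energy-minimal diffeomorphism of `Ω` onto `Ω'`: a diffeomorphism belonging to the
class `H^{1,2}(Ω,Ω')` of sense-preserving `W^{1,2}`-homeomorphisms which minimizes the
Dirichlet energy in that class. -/
def IsEnergyMinimalDiffeo (Ω Ω' : Set ℂ) (f : ℂ → ℂ) : Prop :=
  IsDiffeoOn f Ω Ω' ∧ IsSPHomeoOn f Ω Ω' ∧ MemW12 Ω f ∧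
  ∀ g : ℂ → ℂ, IsSPHomeoOn g Ω Ω' → MemW12 Ω g → dEnergy Ω f ≤ dEnergy Ω g

/-- The normal (radial) derivative `f_N = f_ρ` at `z`. -/
def fNder (f : ℂ → ℂ) (z : ℂ) : ℂ := fderiv ℝ f z (‖z‖⁻¹ • z)

/-- The tangential derivative `f_T = f_θ / ρ` at `z`. -/
def fTder (f : ℂ → ℂ) (z : ℂ) : ℂ := fderiv ℝ f z (‖z‖⁻¹ • (Complex.I * z))

/-- Normal distortion `K_N^f = |f_N|²/J_f`, interpreted as `0` when the numerator
vanishes and as `∞` when `J_f = 0` but the numerator does not. -/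
def distortionN (f : ℂ → ℂ) (z : ℂ) : ℝ≥0∞ :=
  if ‖fNder f z‖ = 0 then 0
  else if jacDet f z = 0 then ⊤
  else ENNReal.ofReal (‖fNder f z‖ ^ 2 / jacDet f z)

/-- Tangential distortion `K_T^f = |f_T|²/J_f`, with the same conventions. -/
def distortionT (f : ℂ → ℂ) (z : ℂ) : ℝ≥0∞ :=
  if ‖fTder f z‖ = 0 then 0
  else if jacDet f z = 0 then ⊤
  else ENNReal.ofReal (‖fTder f z‖ ^ 2 / jacDet f z)

/-- The Wirtinger derivative `f_z`. -/
def wirtingerZ (f : ℂ → ℂ) (z : ℂ) : ℂ :=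
  (fderiv ℝ f z 1 - Complex.I * fderiv ℝ f z Complex.I) / 2

/-- The Wirtinger derivative `f_z̄`. -/
def wirtingerZbar (f : ℂ → ℂ) (z : ℂ) : ℂ :=
  (fderiv ℝ f z 1 + Complex.I * fderiv ℝ f z Complex.I) / 2

/-- `h` is harmonic on `U`: twice differentiable with vanishing Laplacian. -/
def IsHarmonicOn (h : ℂ → ℂ) (U : Set ℂ) : Prop :=
  ContDiffOn ℝ 2 h U ∧
  ∀ z ∈ U, fderiv ℝ (fun w => fderiv ℝ h w 1) z 1
      + fderiv ℝ (fun w => fderiv ℝ h w Complex.I) z Complex.I = 0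

/-- The restriction of `h` to `S` is a monotone mapping: the preimage of every point of
the image is compact and connected. -/
def IsMonotoneMap (h : ℂ → ℂ) (S : Set ℂ) : Prop :=
  ∀ w ∈ h '' S, IsCompact {z ∈ S | h z = w} ∧ IsConnected {z ∈ S | h z = w}

/-- `Γ` is a rectifiable Jordan curve. -/
def IsRectifiableJordanCurve (Γ : Set ℂ) : Prop :=
  ∃ γ : ℝ → ℂ, ContinuousOn γ (Icc 0 1) ∧ γ 0 = γ 1 ∧ InjOn γ (Ico 0 1) ∧
    γ '' Icc 0 1 = Γ ∧ eVariationOn γ (Icc 0 1) ≠ ⊤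

/-- A doubly connected domain is bounded by rectifiable Jordan curves. -/
def HasRectifiableBoundary (Ω : Set ℂ) : Prop :=
  ∃ Γ₁ Γ₂ : Set ℂ, IsRectifiableJordanCurve Γ₁ ∧ IsRectifiableJordanCurve Γ₂ ∧
    Disjoint Γ₁ Γ₂ ∧ frontier Ω = Γ₁ ∪ Γ₂

/-- The function `Λ(t) = (log t − log(1 + log t))/(2 + log t)`. -/
def lamFn (t : ℝ) : ℝ := (Real.log t - Real.log (1 + Real.log t)) / (2 + Real.log t)

/-- Hyperbolic cotangent. -/
def realCoth (x : ℝ) : ℝ := Real.cosh x / Real.sinh x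

/-- The function `Υ(τ) = exp(−π²/(2τ)) · Λ(coth(π²/(2τ)))`. -/
def upsFn (τ : ℝ) : ℝ :=
  Real.exp (-(Real.pi ^ 2) / (2 * τ)) * lamFn (realCoth (Real.pi ^ 2 / (2 * τ)))

/-- The extension of `Υ` to `ℝ≥0∞`, with value `1` at `∞`. -/
def upsE (m : ℝ≥0∞) : ℝ≥0∞ := if m = ⊤ then 1 else ENNReal.ofReal (upsFn m.toReal)

/-- A deformation `h` is stationary: the inner variations of the energy vanish. -/
def IsEnergyStationary (Ω : Set ℂ) (h : ℂ → ℂ) : Prop :=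
  ∀ φ ψ : ℝ → ℂ → ℂ,
    ContDiffOn ℝ (⊤ : ℕ∞) (fun p : ℝ × ℂ => φ p.1 p.2) (univ ×ˢ Ω) →
    (∀ t, IsDiffeoOn (φ t) Ω Ω) →
    (∀ z ∈ Ω, φ 0 z = z) →
    (∀ t, ∀ z ∈ Ω, ψ t (φ t z) = z) →
    (∀ t, ∀ z ∈ Ω, φ t (ψ t z) = z) →
    HasDerivAt (fun t => dEnergy Ω (fun z => h (ψ t z))) 0 0

/-- The distortion function `K_g = max(1, |Dg|²/(2 J_g))` of a mapping of integrable
distortion. -/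
def distortionFn (g : ℂ → ℂ) (w : ℂ) : ℝ :=
  max 1 (hsNormSq g w / (2 * jacDet g w))

/-- `g : Ω' → Ω` is a `W^{1,1}`-homeomorphism of integrable distortion:
`|Dg|² ≤ 2 K J_g` a.e. for some integrable `K ≥ 1`. -/
def HasIntegrableDistortion (Ω' Ω : Set ℂ) (g : ℂ → ℂ) : Prop :=
  IsHomeoOn g Ω' Ω ∧ MemW11 Ω' g ∧
  ∃ K : ℂ → ℝ, (∀ w, 1 ≤ K w) ∧ IntegrableOn K Ω' volume ∧
    ∀ᵐ w ∂(volume.restrict Ω'), hsNormSq g w ≤ 2 * K w * jacDet g w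

/-- The real inner product of two complex numbers. -/
def rinner (x y : ℂ) : ℝ := x.re * y.re + x.im * y.im

/-- The `W^{1,2}(Ω)` inner product pairing. -/
def w12Pairing (Ω : Set ℂ) (f φ : ℂ → ℂ) : ℝ :=
  ∫ z in Ω, (rinner (f z) (φ z) + rinner (fderiv ℝ f z 1) (fderiv ℝ φ z 1)
    + rinner (fderiv ℝ f z Complex.I) (fderiv ℝ φ z Complex.I))

/-- Weak convergence `h_j ⇀ h` in `W^{1,2}(Ω)`. -/
def WeakConvW12 (Ω : Set ℂ) (hj : ℕ → ℂ → ℂ) (h : ℂ → ℂ) : Prop :=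
  (∀ j, MemW12 Ω (hj j)) ∧ MemW12 Ω h ∧
  ∀ φ : ℂ → ℂ, MemW12 Ω φ →
    Tendsto (fun j => w12Pairing Ω (hj j) φ) atTop (𝓝 (w12Pairing Ω h φ))

/-- A quasiconformal mapping of `Ω₀` onto `Ω`: a homeomorphism of class `W^{1,2}_loc`
with essentially bounded distortion. -/
def IsQuasiconformal (f : ℂ → ℂ) (Ω₀ Ω : Set ℂ) : Prop :=
  IsHomeoOn f Ω₀ Ω ∧ MemW12loc Ω₀ f ∧
  ∃ M : ℝ, ∀ᵐ z ∂(volume.restrict Ω₀), hsNormSq f z ≤ M * (2 * jacDet f z)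



/-- helper: lower bound for infDist over a nonempty set -/
lemma my_le_infDist {s : Set ℂ} (hs : s.Nonempty) {x : ℂ} {c : ℝ}
    (h : ∀ y ∈ s, c ≤ dist x y) : c ≤ infDist x s := by
  by_contra hlt
  push_neg at hlt
  obtain ⟨y, hy, hd⟩ := (Metric.infDist_lt_iff hs).mp hlt
  exact absurd (h y hy) (not_le.mpr hd)

/-- Smooth (in fact: restriction-of-smooth) functions are uniformly dense in continuous
functions on a compact subset of `ℂ`. -/
lemma exists_smooth_near (K : Set ℂ) (hK : IsCompact K) (f : ℂ → ℂ)
    (hf : ContinuousOn f K) {ε : ℝ} (hε : 0 < ε) :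
    ∃ g : ℂ → ℂ, ContDiff ℝ (⊤ : ℕ∞) g ∧ ∀ z ∈ K, dist (g z) (f z) < ε := by
  rcases K.eq_empty_or_nonempty with rfl | hne
  · exact ⟨fun _ => 0, contDiff_const, fun z hz => absurd hz (notMem_empty z)⟩
  haveI : CompactSpace K := isCompact_iff_compactSpace.mp hK
  -- the star subalgebra of restrictions of smooth functions
  let A : StarSubalgebra ℂ C(K, ℂ) :=
    { carrier := {F | ∃ g : ℂ → ℂ, ContDiff ℝ (⊤ : ℕ∞) g ∧ ∀ x : K, g x = F x}
      mul_mem' := by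
        rintro F G ⟨g, hg, hgF⟩ ⟨g', hg', hg'G⟩
        exact ⟨g * g', hg.mul hg', fun x => by
          simp [hgF x, hg'G x]⟩
      add_mem' := by
        rintro F G ⟨g, hg, hgF⟩ ⟨g', hg', hg'G⟩
        exact ⟨g + g', hg.add hg', fun x => by simp [hgF x, hg'G x]⟩
      algebraMap_mem' := fun r =>
        ⟨fun _ => r, contDiff_const, fun x => rfl⟩
      star_mem' := by
        rintro F ⟨g, hg, hgF⟩
        refine ⟨fun z => (starRingEnd ℂ) (g z), ?_, fun x => by simp [hgF x]⟩
        exact Complex.conjLIE.contDiff.comp hg }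
  have hA : A.SeparatesPoints := by
    intro x y hxy
    refine ⟨_, ⟨⟨fun z : K => (z : ℂ), continuous_subtype_val⟩, ⟨id, contDiff_id, fun x => rfl⟩, rfl⟩, ?_⟩
    simpa [Subtype.ext_iff] using hxy
  have htop := ContinuousMap.starSubalgebra_topologicalClosure_eq_top_of_separatesPoints A hA
  set F : C(K, ℂ) := ⟨K.restrict f, hf.restrict⟩ with hF
  have hmem : F ∈ closure (A : Set C(K, ℂ)) := by
    have : F ∈ A.topologicalClosure := htop ▸ trivial
    exact this
  obtain ⟨G, hGA, hGF⟩ := Metric.mem_closure_iff.mp hmem ε hε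
  obtain ⟨g, hg, hgG⟩ := hGA
  refine ⟨g, hg, fun z hz => ?_⟩
  have h1 : dist (G ⟨z, hz⟩) (F ⟨z, hz⟩) ≤ dist G F := ContinuousMap.dist_apply_le_dist _
  have h2 : g z = G ⟨z, hz⟩ := hgG ⟨z, hz⟩
  have h3 : F ⟨z, hz⟩ = f z := rfl
  rw [h2, ← h3]
  exact lt_of_le_of_lt h1 (by rwa [dist_comm] at hGF)
-- almost-open lemma
lemma almost_open {f : ℂ → ℂ} {U : Set ℂ} (hUo : IsOpen U) (hUne : U.Nonempty)
    (hK : IsCompact (closure U)) (hf : ContinuousOn f (closure U)) {w : ℂ}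
    (hdeg : HasDegree f U w 1) :
    ∀ w' : ℂ, dist w' w < infDist w (f '' frontier U) / 2 → w' ∈ f '' closure U := by
  intro w' hw'
  by_contra hnot
  set ρ := infDist w (f '' frontier U) with hρ
  have hρpos : 0 < ρ := hdeg.1
  have hKim : IsCompact (f '' closure U) := hK.image_of_continuousOn hf
  have hKimne : (f '' closure U).Nonempty := (hUne.mono subset_closure).image f
  have hd : 0 < infDist w' (f '' closure U) :=
    (hKim.isClosed.notMem_iff_infDist_pos hKimne).mp hnot
  set d := infDist w' (f '' closure U) with hdd
  set ε := min d (ρ / 2) with hε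
  have hεpos : 0 < ε := lt_min hd (by linarith)
  obtain ⟨g₀, hg₀, hg₀f⟩ := exists_smooth_near (closure U) hK f hf (half_pos hεpos)
  set g : ℂ → ℂ := fun z => g₀ z + (w - w') with hg
  have hgsm : ContDiff ℝ (⊤ : ℕ∞) g := hg₀.add contDiff_const
  have hnosol : ∀ z ∈ closure U, g z ≠ w := by
    intro z hz he
    have hgz : g₀ z = w' := by
      have : g₀ z + (w - w') = w := he
      linear_combination this
    have h1 : d ≤ dist w' (f z) := Metric.infDist_le_dist_of_mem (mem_image_of_mem f hz)
    have h2 : dist (g₀ z) (f z) < ε / 2 := hg₀f z hz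
    rw [hgz] at h2
    have : ε / 2 ≤ d / 2 := by
      have : ε ≤ d := min_le_left _ _
      linarith
    linarith
  have hclose : ∀ z ∈ closure U, dist (g z) (f z) < ρ := by
    intro z hz
    have h1 : dist (g z) (g₀ z) = ‖w - w'‖ := by
      simp [hg, dist_eq_norm]
    have h2 : ‖w - w'‖ = dist w w' := (dist_eq_norm w w').symm
    have h3 : dist (g z) (f z) ≤ dist (g z) (g₀ z) + dist (g₀ z) (f z) := dist_triangle _ _ _
    have h4 : dist (g₀ z) (f z) < ε / 2 := hg₀f z hz
    have h5 : ε / 2 ≤ ρ / 4 := by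
      have : ε ≤ ρ / 2 := min_le_right _ _
      linarith
    have h6 : dist w w' < ρ / 2 := by rwa [dist_comm] at hw'
    calc dist (g z) (f z) ≤ dist (g z) (g₀ z) + dist (g₀ z) (f z) := h3
      _ = ‖w - w'‖ + dist (g₀ z) (f z) := by rw [h1]
      _ = dist w w' + dist (g₀ z) (f z) := by rw [h2]
      _ < ρ / 2 + ρ / 4 := by linarith
      _ < ρ := by linarith
  have hreg : IsRegularValueOn g U w := fun z hz he =>
    absurd he (hnosol z (subset_closure hz))
  have hcount := hdeg.2 g hgsm hclose hreg
  have hempty : {z ∈ U | g z = w} = ∅ := by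
    ext z
    simp only [mem_setOf_eq, mem_empty_iff_false, iff_false, not_and]
    exact fun hz => hnosol z (subset_closure hz)
  rw [signedCount, hempty, finsum_mem_empty] at hcount
  exact absurd hcount (by norm_num)
/-- Properness of a sense-preserving homeomorphism: points mapped deep inside `Ω'`
stay away from the boundary of `Ω`. -/
lemma sp_proper {Ω Ω' : Set ℂ} (hΩ : IsBoundedDomain Ω) (hΩ' : IsBoundedDomain Ω')
    {f : ℂ → ℂ} (hf : IsSPHomeoOn f Ω Ω') {t : ℝ} (ht : 0 < t) :
    ∃ ε > 0, ∀ z ∈ Ω, t ≤ infDist (f z) (frontier Ω') → ε ≤ infDist z Ωᶜ := by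
  obtain ⟨hΩo, hΩconn, hΩbdd⟩ := hΩ
  obtain ⟨hΩ'o, hΩ'conn, hΩ'bdd⟩ := hΩ'
  obtain ⟨⟨hfc, hfinj, hfim⟩, hfdeg⟩ := hf
  by_contra hcon
  push_neg at hcon
  have H : ∀ k : ℕ, ∃ z ∈ Ω, t ≤ infDist (f z) (frontier Ω') ∧ infDist z Ωᶜ < 1 / (k + 1) := by
    intro k
    obtain ⟨z, hz1, hz2, hz3⟩ := hcon (1 / (k + 1)) (by positivity)
    exact ⟨z, hz1, hz2, hz3⟩
  choose z hzΩ hzt hzd using H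
  -- compact container for the pair sequence
  have hcΩ : IsCompact (closure Ω) :=
    Metric.isCompact_of_isClosed_isBounded isClosed_closure hΩbdd.closure
  have hcΩ' : IsCompact (closure Ω') :=
    Metric.isCompact_of_isClosed_isBounded isClosed_closure hΩ'bdd.closure
  have hfz : ∀ k, f (z k) ∈ Ω' := by
    intro k; rw [← hfim]; exact mem_image_of_mem f (hzΩ k)
  have hmem : ∀ k, (z k, f (z k)) ∈ (closure Ω) ×ˢ (closure Ω') := fun k =>
    ⟨subset_closure (hzΩ k), subset_closure (hfz k)⟩
  obtain ⟨q, hqmem, φ, hφmono, hφtend⟩ := (hcΩ.prod hcΩ').tendsto_subseq hmem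
  obtain ⟨ζ, p⟩ := q
  have hptend : Tendsto (fun k => f (z (φ k))) atTop (𝓝 p) :=
    (continuous_snd.tendsto _).comp hφtend
  have hpcl : p ∈ closure Ω' := hqmem.2
  -- p is an interior point of Ω'
  have hpt : t ≤ infDist p (frontier Ω') := by
    have : Tendsto (fun k => infDist (f (z (φ k))) (frontier Ω')) atTop
        (𝓝 (infDist p (frontier Ω'))) :=
      ((continuous_infDist_pt (frontier Ω')).tendsto _).comp hptend
    exact ge_of_tendsto this (Eventually.of_forall fun k => hzt (φ k))
  have hpΩ' : p ∈ Ω' := by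
    by_contra hnp
    have hpf : p ∈ frontier Ω' := ⟨hpcl, by rwa [hΩ'o.interior_eq]⟩
    have := Metric.infDist_zero_of_mem hpf
    rw [this] at hpt
    exact absurd hpt (not_le.mpr ht)
  obtain ⟨a, haΩ, hfa⟩ : ∃ a ∈ Ω, f a = p := by rwa [← hfim] at hpΩ'
  obtain ⟨r, hr, hball⟩ := Metric.isOpen_iff.mp hΩo a haΩ
  set U := ball a (r / 2) with hU
  have hUsub : closure U ⊆ Ω := by
    refine (closure_ball_subset_closedBall.trans ?_)
    exact (closedBall_subset_ball (by linarith)).trans hball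
  have hUcpt : IsCompact (closure U) :=
    Metric.isCompact_of_isClosed_isBounded isClosed_closure isBounded_ball.closure
  have haU : a ∈ U := mem_ball_self (by linarith)
  have hdeg : HasDegree f U p 1 :=
    hfdeg U isOpen_ball hUcpt hUsub p ⟨a, haU, hfa⟩
  have hAO := almost_open isOpen_ball ⟨a, haU⟩ hUcpt (hfc.mono hUsub) hdeg
  set ρ := infDist p (f '' frontier U) with hρ
  have hρpos : 0 < ρ := hdeg.1
  -- lower bound for infDist · Ωᶜ on closure U
  have hΩcne : Ωᶜ.Nonempty := by
    obtain ⟨R, hR⟩ := hΩbdd.subset_closedBall 0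
    refine ⟨((R + 1 : ℝ) : ℂ), fun hmem => ?_⟩
    have := hR hmem
    rw [mem_closedBall] at this
    have h1 : dist ((R + 1 : ℝ) : ℂ) 0 = |R + 1| := by
      rw [Complex.dist_eq, sub_zero, Complex.norm_real, Real.norm_eq_abs]
    rw [h1] at this
    have h2 : R + 1 ≤ |R + 1| := le_abs_self _
    linarith
  have hΩcc : IsClosed Ωᶜ := hΩo.isClosed_compl
  obtain ⟨z₀, hz₀K, hz₀min⟩ :=
    hUcpt.exists_isMinOn ⟨a, subset_closure haU⟩
      ((continuous_infDist_pt Ωᶜ).continuousOn)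
  have hz₀min : ∀ y ∈ closure U, infDist z₀ Ωᶜ ≤ infDist y Ωᶜ := fun y hy => hz₀min hy
  have hm : 0 < infDist z₀ Ωᶜ :=
    (hΩcc.notMem_iff_infDist_pos hΩcne).mp (fun hmem => hmem (hUsub hz₀K))
  set m := infDist z₀ Ωᶜ with hmdef
  -- eventually f (z (φ k)) ∈ ball p (ρ/2)
  have hev : ∀ᶠ k in atTop, dist (f (z (φ k))) p < ρ / 2 :=
    (Metric.tendsto_nhds.mp hptend) (ρ / 2) (by linarith)
  obtain ⟨k₁, hk₁⟩ := exists_nat_one_div_lt hm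
  obtain ⟨N, hN⟩ := eventually_atTop.mp hev
  set k := max N k₁ with hk
  have hdk : dist (f (z (φ k))) p < ρ / 2 := hN k (le_max_left _ _)
  have hzin : z (φ k) ∈ closure U := by
    obtain ⟨z', hz'U, hz'⟩ := hAO (f (z (φ k))) hdk
    have : z' = z (φ k) := hfinj (hUsub hz'U) (hzΩ (φ k)) hz'
    rwa [← this]
  have hge : m ≤ infDist (z (φ k)) Ωᶜ := hz₀min _ hzin
  have hlt : infDist (z (φ k)) Ωᶜ < 1 / (φ k + 1) := hzd (φ k)
  have hφk : (k : ℝ) + 1 ≤ (φ k : ℝ) + 1 := by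
    have : k ≤ φ k := hφmono.le_apply
    exact_mod_cast Nat.succ_le_succ this
  have h1 : 1 / ((φ k : ℝ) + 1) ≤ 1 / ((k : ℝ) + 1) := by
    apply one_div_le_one_div_of_le (by positivity) hφk
  have h2 : 1 / ((k : ℝ) + 1) ≤ 1 / ((k₁ : ℝ) + 1) := by
    apply one_div_le_one_div_of_le (by positivity)
    have : (k₁ : ℝ) ≤ k := by exact_mod_cast le_max_right N k₁
    linarith
  linarith
lemma compl_nonempty_of_bounded {s : Set ℂ} (hb : Bornology.IsBounded s) : sᶜ.Nonempty := by
  obtain ⟨R, hR⟩ := hb.subset_closedBall 0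
  refine ⟨((R + 1 : ℝ) : ℂ), fun hmem => ?_⟩
  have h0 := hR hmem
  rw [mem_closedBall] at h0
  have h1 : dist ((R + 1 : ℝ) : ℂ) 0 = |R + 1| := by
    rw [Complex.dist_eq, sub_zero, Complex.norm_real, Real.norm_eq_abs]
  rw [h1] at h0
  have h2 : R + 1 ≤ |R + 1| := le_abs_self _
  linarith

lemma frontier_nonempty_of_bounded {s : Set ℂ} (ho : IsOpen s) (hne : s.Nonempty)
    (hb : Bornology.IsBounded s) : (frontier s).Nonempty := by
  by_contra hfr
  rw [not_nonempty_iff_eq_empty] at hfr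
  have h1 : closure s \ s = ∅ := by rw [← ho.frontier_eq]; exact hfr
  have h2 : closure s ⊆ s := diff_eq_empty.mp h1
  have h3 : IsClosed s := isClosed_of_closure_subset h2
  rcases isClopen_iff.mp ⟨h3, ho⟩ with h | h
  · exact absurd h (Set.nonempty_iff_ne_empty.mp hne)
  · obtain ⟨x, hx⟩ := compl_nonempty_of_bounded hb
    exact hx (h ▸ mem_univ x)

/-- Continuity of the limit of the approximating homeomorphisms. -/
lemma limit_continuousOn {Ω : Set ℂ} (hΩo : IsOpen Ω) {h : ℂ → ℂ} {hj : ℕ → ℂ → ℂ}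
    (hjc : ∀ j, ContinuousOn (hj j) Ω)
    (hconv : ∀ K : Set ℂ, K ⊆ Ω → IsCompact K → TendstoUniformlyOn (fun j => hj j) h atTop K) :
    ContinuousOn h Ω := by
  apply continuousOn_of_forall_continuousAt
  intro z hz
  obtain ⟨r, hr, hball⟩ := Metric.isOpen_iff.mp hΩo z hz
  have hsub : closedBall z (r / 2) ⊆ Ω :=
    (closedBall_subset_ball (by linarith)).trans hball
  have huc := hconv _ hsub (isCompact_closedBall z (r / 2))
  have hcont : ContinuousOn h (closedBall z (r / 2)) :=
    huc.continuousOn (Eventually.of_forall fun j => (hjc j).mono hsub).frequently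
  exact hcont.continuousAt (closedBall_mem_nhds z (by linarith))

/-- Properness of the deformation `h`, transferred from the homeomorphisms via
`δ`-uniform convergence. -/
lemma deform_proper {Ω Ω' : Set ℂ} (hΩ : IsBoundedDomain Ω) (hΩ' : IsBoundedDomain Ω')
    {h : ℂ → ℂ} {hj : ℕ → ℂ → ℂ} (hSP : ∀ j, IsSPHomeoOn (hj j) Ω Ω')
    (hδconv : TendstoUniformlyOn (fun j => deltaFun Ω Ω' (hj j)) (deltaFun Ω Ω' h) atTop
      (closure Ω)) {t : ℝ} (ht : 0 < t) :
    ∃ ε > 0, ∀ z ∈ Ω, t ≤ infDist (h z) (frontier Ω') → ε ≤ infDist z Ωᶜ := by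
  have hev := (Metric.tendstoUniformlyOn_iff.mp hδconv) (t / 2) (by linarith)
  obtain ⟨J, hJ⟩ := eventually_atTop.mp hev
  obtain ⟨ε, hε, hP⟩ := sp_proper hΩ hΩ' (hSP J) (t := t / 2) (by linarith)
  refine ⟨ε, hε, fun z hz hdist => ?_⟩
  have h1 := hJ J le_rfl z (subset_closure hz)
  have e1 : deltaFun Ω Ω' h z = infDist (h z) (frontier Ω') := if_pos hz
  have e2 : deltaFun Ω Ω' (hj J) z = infDist (hj J z) (frontier Ω') := if_pos hz
  rw [e1, e2, Real.dist_eq] at h1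
  have h2 := abs_lt.mp h1
  exact hP z hz (by linarith [h2.1, h2.2])

/-- Eventual capture of the preimages `h_j⁻¹(w')` in a fixed compact subset of `Ω`. -/
lemma preimage_capture {Ω Ω' : Set ℂ} (hΩ : IsBoundedDomain Ω) (hΩ' : IsBoundedDomain Ω')
    {h : ℂ → ℂ} {hj : ℕ → ℂ → ℂ} (hSP : ∀ j, IsSPHomeoOn (hj j) Ω Ω')
    (hδconv : TendstoUniformlyOn (fun j => deltaFun Ω Ω' (hj j)) (deltaFun Ω Ω' h) atTop
      (closure Ω)) {w' : ℂ} (hw' : w' ∈ Ω') :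
    ∃ K : Set ℂ, IsCompact K ∧ K ⊆ Ω ∧ ∀ᶠ j in atTop, ∃ zj ∈ K, hj j zj = w' := by
  -- positive distance of w' from the boundary of Ω'
  have hFne : (frontier Ω').Nonempty :=
    frontier_nonempty_of_bounded hΩ'.1 ⟨w', hw'⟩ hΩ'.2.2
  have hδ' : 0 < infDist w' (frontier Ω') := by
    refine (isClosed_frontier.notMem_iff_infDist_pos hFne).mp ?_
    intro hmem
    exact hmem.2 (by rw [hΩ'.1.interior_eq]; exact hw')
  set δ' := infDist w' (frontier Ω') with hδ'def
  obtain ⟨ε, hε, hQ⟩ := deform_proper hΩ hΩ' hSP hδconv (t := δ' / 2) (by linarith)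
  refine ⟨{z | ε ≤ infDist z Ωᶜ} ∩ closure Ω, ?_, ?_, ?_⟩
  · refine IsCompact.of_isClosed_subset
      (Metric.isCompact_of_isClosed_isBounded isClosed_closure hΩ.2.2.closure)
      ((isClosed_le continuous_const (continuous_infDist_pt _)).inter isClosed_closure)
      inter_subset_right
  · rintro z ⟨hz1, _⟩
    have hz1' : ε ≤ infDist z Ωᶜ := hz1
    by_contra hzΩ
    have h0 : infDist z Ωᶜ = 0 := Metric.infDist_zero_of_mem hzΩ
    rw [h0] at hz1'
    linarith
  · have hev := (Metric.tendstoUniformlyOn_iff.mp hδconv) (δ' / 4) (by linarith)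
    refine hev.mono fun j hjb => ?_
    obtain ⟨zj, hzjΩ, hzjw⟩ : ∃ zj ∈ Ω, hj j zj = w' := by
      have : w' ∈ hj j '' Ω := ((hSP j).1.2.2) ▸ hw'
      obtain ⟨zj, h1, h2⟩ := this
      exact ⟨zj, h1, h2⟩
    have h1 := hjb zj (subset_closure hzjΩ)
    have e1 : deltaFun Ω Ω' h zj = infDist (h zj) (frontier Ω') := if_pos hzjΩ
    have e2 : deltaFun Ω Ω' (hj j) zj = δ' := by
      rw [deltaFun, if_pos hzjΩ, hzjw]
    rw [e1, e2, Real.dist_eq] at h1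
    have h2 := abs_lt.mp h1
    have h3 : δ' / 2 ≤ infDist (h zj) (frontier Ω') := by linarith [h2.1, h2.2]
    exact ⟨zj, ⟨hQ zj hzjΩ h3, subset_closure hzjΩ⟩, hzjw⟩

/-- Surjectivity of the deformation onto `Ω'`. -/
lemma deform_surj {Ω Ω' : Set ℂ} (hΩ : IsBoundedDomain Ω) (hΩ' : IsBoundedDomain Ω')
    {h : ℂ → ℂ} {hj : ℕ → ℂ → ℂ} (hSP : ∀ j, IsSPHomeoOn (hj j) Ω Ω')
    (hconv : ∀ K : Set ℂ, K ⊆ Ω → IsCompact K → TendstoUniformlyOn (fun j => hj j) h atTop K)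
    (hδconv : TendstoUniformlyOn (fun j => deltaFun Ω Ω' (hj j)) (deltaFun Ω Ω' h) atTop
      (closure Ω)) {w' : ℂ} (hw' : w' ∈ Ω') : w' ∈ h '' Ω := by
  have hcont : ContinuousOn h Ω :=
    limit_continuousOn hΩ.1 (fun j => (hSP j).1.1) hconv
  obtain ⟨K, hKc, hKΩ, hKev⟩ := preimage_capture hΩ hΩ' hSP hδconv hw'
  have H : ∀ k : ℕ, ∃ zk ∈ K, dist (h zk) w' < 1 / (k + 1) := by
    intro k
    have E2 : ∀ᶠ j in atTop, ∀ z ∈ K, dist (h z) (hj j z) < 1 / (k + 1) :=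
      (Metric.tendstoUniformlyOn_iff.mp (hconv K hKΩ hKc)) _ (by positivity)
    obtain ⟨j, hj1, hj2⟩ := (hKev.and E2).exists
    obtain ⟨zj, hzjK, hzjw⟩ := hj1
    exact ⟨zj, hzjK, by rw [← hzjw]; exact hj2 zj hzjK⟩
  choose zk hzkK hzkd using H
  obtain ⟨zs, hzsK, φ, hφ, htend⟩ := hKc.tendsto_subseq hzkK
  have h1 : Tendsto (fun k => h (zk (φ k))) atTop (𝓝 (h zs)) :=
    ((hcont.continuousAt (hΩ.1.mem_nhds (hKΩ hzsK))).tendsto).comp htend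
  have h2 : Tendsto (fun k => h (zk (φ k))) atTop (𝓝 w') := by
    rw [tendsto_iff_dist_tendsto_zero]
    have hb : ∀ k : ℕ, dist (h (zk (φ k))) w' ≤ 1 / (k + 1) := by
      intro k
      refine le_trans (le_of_lt (hzkd (φ k))) ?_
      apply one_div_le_one_div_of_le (by positivity)
      have : (k : ℝ) ≤ φ k := by exact_mod_cast hφ.le_apply
      linarith
    exact squeeze_zero (fun k => dist_nonneg) hb tendsto_one_div_add_atTop_nhds_zero_nat
  exact ⟨zs, hKΩ hzsK, tendsto_nhds_unique h1 h2⟩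
/-- **Lemma 3.4.**  A deformation has topological degree `1` at every point of `Ω*`:
there exists an admissible compactly contained subdomain, on every such subdomain the
degree is `1`, and in particular `h(Ω) ⊇ Ω*`. -/
theorem deformation_degree_one_and_surjective
    (Ω Ω' : Set ℂ) (hΩ : IsBoundedDomain Ω) (hΩ' : IsBoundedDomain Ω')
    (h : ℂ → ℂ) (hh : IsDeformation Ω Ω' h) (w : ℂ) (hw : w ∈ Ω') :
    (∃ U : Set ℂ, IsOpen U ∧ IsCompact (closure U) ∧ closure U ⊆ Ω ∧
      (∃ c > 0, ∀ z ∈ Ω \ U, c ≤ dist (h z) w)) ∧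
    (∀ U : Set ℂ, IsOpen U → IsCompact (closure U) → closure U ⊆ Ω →
      (∃ c > 0, ∀ z ∈ Ω \ U, c ≤ dist (h z) w) → HasDegree h U w 1) ∧
    Ω' ⊆ h '' Ω := by
  obtain ⟨_, _, _, _, hj, hSP, hconv, hδconv⟩ := hh
  have hcont : ContinuousOn h Ω :=
    limit_continuousOn hΩ.1 (fun j => (hSP j).1.1) hconv
  -- distance from w to the boundary of Ω'
  have hFne : (frontier Ω').Nonempty :=
    frontier_nonempty_of_bounded hΩ'.1 ⟨w, hw⟩ hΩ'.2.2
  have hδpos : 0 < infDist w (frontier Ω') := by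
    refine (isClosed_frontier.notMem_iff_infDist_pos hFne).mp ?_
    intro hmem
    exact hmem.2 (by rw [hΩ'.1.interior_eq]; exact hw)
  set δ := infDist w (frontier Ω') with hδdef
  refine ⟨?_, ?_, ?_⟩
  · -- Part A: existence of an admissible subdomain
    obtain ⟨ε, hε, hQ⟩ := deform_proper hΩ hΩ' hSP hδconv (t := δ / 2) (by linarith)
    refine ⟨{z | ε / 2 < infDist z Ωᶜ}, isOpen_lt continuous_const (continuous_infDist_pt _),
      ?_, ?_, δ / 2, by linarith, ?_⟩
    · refine IsCompact.of_isClosed_subset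
        (Metric.isCompact_of_isClosed_isBounded isClosed_closure hΩ.2.2.closure)
        isClosed_closure (closure_mono ?_)
      intro z hz
      have hz' : ε / 2 < infDist z Ωᶜ := hz
      by_contra hzΩ
      have h0 : infDist z Ωᶜ = 0 := Metric.infDist_zero_of_mem hzΩ
      rw [h0] at hz'
      linarith
    · have hstep : closure {z | ε / 2 < infDist z Ωᶜ} ⊆ {z | ε / 2 ≤ infDist z Ωᶜ} :=
        closure_minimal (fun z hz => show ε / 2 ≤ infDist z Ωᶜ from le_of_lt hz)
          (isClosed_le continuous_const (continuous_infDist_pt _))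
      intro z hz
      have hz' : ε / 2 ≤ infDist z Ωᶜ := hstep hz
      by_contra hzΩ
      have h0 : infDist z Ωᶜ = 0 := Metric.infDist_zero_of_mem hzΩ
      rw [h0] at hz'
      linarith
    · rintro z ⟨hzΩ, hzU⟩
      have hz' : infDist z Ωᶜ ≤ ε / 2 := le_of_not_gt hzU
      have hδhz : infDist (h z) (frontier Ω') < δ / 2 := by
        by_contra hcontr
        have := hQ z hzΩ (le_of_not_gt hcontr)
        linarith
      have htri : infDist w (frontier Ω') ≤ infDist (h z) (frontier Ω') + dist w (h z) :=
        Metric.infDist_le_infDist_add_dist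
      rw [dist_comm]
      rw [← hδdef] at htri
      linarith
  · -- Part B: the degree is 1 on every admissible subdomain
    rintro U hUo hUc hUsub ⟨c, hc, hbound⟩
    obtain ⟨zs, hzsΩ, hzsw⟩ := deform_surj hΩ hΩ' hSP hconv hδconv hw
    have hUne : U.Nonempty := by
      by_contra hne
      rw [not_nonempty_iff_eq_empty] at hne
      have h0 := hbound zs ⟨hzsΩ, by rw [hne]; exact notMem_empty zs⟩
      rw [hzsw] at h0
      rw [dist_self] at h0
      linarith
    have hFUne : (frontier U).Nonempty :=
      frontier_nonempty_of_bounded hUo hUne (hUc.isBounded.subset subset_closure)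
    have hfrsub : frontier U ⊆ Ω \ U := by
      intro z hz
      rw [hUo.frontier_eq] at hz
      exact ⟨hUsub hz.1, hz.2⟩
    set μ := infDist w (h '' frontier U) with hμdef
    have hμc : ∀ y ∈ h '' frontier U, c ≤ dist w y := by
      rintro y ⟨x, hx, rfl⟩
      rw [dist_comm]
      exact hbound x (hfrsub hx)
    have hμ : c ≤ μ := my_le_infDist (hFUne.image h) hμc
    refine ⟨lt_of_lt_of_le hc hμ, ?_⟩
    intro g hg hgclose hgreg
    have hclUne : (closure U).Nonempty := hUne.closure
    have hcontcl : ContinuousOn (fun z => dist (g z) (h z)) (closure U) :=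
      continuous_dist.comp_continuousOn
        ((hg.continuous.continuousOn : ContinuousOn g (closure U)).prodMk (hcont.mono hUsub))
    obtain ⟨z₀, hz₀, hz₀max⟩ := hUc.exists_isMaxOn hclUne hcontcl
    set s := dist (g z₀) (h z₀) with hsdef
    have hsμ : s < μ := hgclose z₀ hz₀
    set η := (μ - s) / 3 with hηdef
    have hη : 0 < η := by
      have : 0 ≤ s := dist_nonneg
      rw [hηdef]; linarith
    obtain ⟨K, hKc, hKΩ, hKev⟩ := preimage_capture hΩ hΩ' hSP hδconv hw
    have E1 : ∀ᶠ j in atTop, ∀ z ∈ closure U, dist (h z) (hj j z) < η :=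
      (Metric.tendstoUniformlyOn_iff.mp (hconv (closure U) hUsub hUc)) η hη
    have E2 : ∀ᶠ j in atTop, ∀ z ∈ K, dist (h z) (hj j z) < c :=
      (Metric.tendstoUniformlyOn_iff.mp (hconv K hKΩ hKc)) c hc
    obtain ⟨j, hj1, hj2, hj3⟩ := (hKev.and (E1.and E2)).exists
    obtain ⟨zj, hzjK, hzjw⟩ := hj1
    have hzjΩ : zj ∈ Ω := hKΩ hzjK
    have hzjU : zj ∈ U := by
      by_contra hno
      have hb := hbound zj ⟨hzjΩ, hno⟩
      have hd : dist (h zj) w < c := by rw [← hzjw]; exact hj3 zj hzjK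
      linarith
    have hdegj := (hSP j).2 U hUo hUc hUsub w ⟨zj, hzjU, hzjw⟩
    refine hdegj.2 g hg ?_ hgreg
    intro z hz
    have b1 : dist (g z) (h z) ≤ s := hz₀max hz
    have b2 : dist (h z) (hj j z) < η := hj2 z hz
    have b3 : dist (g z) (hj j z) ≤ dist (g z) (h z) + dist (h z) (hj j z) :=
      dist_triangle _ _ _
    have hρj : μ - η ≤ infDist w (hj j '' frontier U) := by
      apply my_le_infDist (hFUne.image _)
      rintro y ⟨x, hx, rfl⟩
      have c1 : μ ≤ dist w (h x) := Metric.infDist_le_dist_of_mem (mem_image_of_mem h hx)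
      have c2 : dist (h x) (hj j x) < η := hj2 x (frontier_subset_closure hx)
      have c3 : dist w (h x) ≤ dist w (hj j x) + dist (hj j x) (h x) := dist_triangle _ _ _
      rw [dist_comm (hj j x) (h x)] at c3
      linarith
    have : dist (g z) (hj j z) < s + η := by linarith
    have hfin : s + η < μ - η := by rw [hηdef]; linarith
    linarith
  · -- Part C: surjectivity
    intro w' hw'
    exact deform_surj hΩ hΩ' hSP hconv hδconv hw'
end
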